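/- Let (ρ,τ) be an equivariant pair with τ of class C^∞, let ν, μ ∈ ℝ, and let B := ν + μ(|∂τ/∂z(0)|² − |∂τ/∂z̄(0)|²) (a constant). Then there exists a C^∞ function φ : ℂ → ℝ such that for all z, v ∈ ℂ: i·Dφ(z)(v) = −(1/2)(conj(S(z))·v − S(z)·conj(v)) + (B/2)(conj(z)·v − z·conj(v)), where Dφ(z) is the real Fréchet derivative of φ at z (i.e. θ^{ν,μ}_τ = θ_B + i·dφ with φ real-valued). -/

import Mathlib

open Complex MeasureTheory ComplexConjugate

noncomputable section

/-- The group `G = U(1) ⋉ ℂ`, as pairs `[a, b]` with `a ∈ U(1)`, `b ∈ ℂ`. -/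
abbrev G1 : Type := Circle × ℂ

/-- Multiplication `[a,b][a',b'] = [aa', ab' + b]` in `G`. -/
def Gmul (g h : G1) : G1 := (g.1 * h.1, (g.1 : ℂ) * h.2 + g.2)

/-- Inverse `[a,b]⁻¹ = [a⁻¹, -a⁻¹ b]` in `G`. -/
def Ginv (g : G1) : G1 := (g.1⁻¹, -((g.1⁻¹ : Circle) : ℂ) * g.2)

/-- The action `[a,b]·z = a z + b` of `G` on `ℂ`. -/
def Gact (g : G1) (z : ℂ) : ℂ := (g.1 : ℂ) * z + g.2

/-- `ρ : G → G` is a group homomorphism. -/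
def IsGHom (ρ : G1 → G1) : Prop := ∀ g h, ρ (Gmul g h) = Gmul (ρ g) (ρ h)

/-- `(ρ, τ)` is an equivariant pair: `ρ` is a `G`-endomorphism and
`τ(g·z) = ρ(g)·τ(z)` for all `g ∈ G`, `z ∈ ℂ`. -/
def Equivariant (ρ : G1 → G1) (τ : ℂ → ℂ) : Prop :=
  IsGHom ρ ∧ ∀ g z, τ (Gact g z) = Gact (ρ g) (τ z)

/-- The automorphy factor `j^α(g,z) = exp(-iα Im(z conj(g⁻¹·0)))`. -/
def jfac (α : ℝ) (g : G1) (z : ℂ) : ℂ :=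
  Complex.exp (-Complex.I * α * ((z * conj (Gact (Ginv g) 0)).im : ℝ))

/-- Wirtinger derivative `∂f/∂z`. -/
def wdz (f : ℂ → ℂ) (z : ℂ) : ℂ :=
  (1/2 : ℂ) * (fderiv ℝ f z 1 - Complex.I * fderiv ℝ f z Complex.I)

/-- Wirtinger derivative `∂f/∂z̄`. -/
def wdzbar (f : ℂ → ℂ) (z : ℂ) : ℂ :=
  (1/2 : ℂ) * (fderiv ℝ f z 1 + Complex.I * fderiv ℝ f z Complex.I)

/-- `S(z) = νz + μ(τ(z) ∂τ̄/∂z̄(z) − τ̄(z) ∂τ/∂z̄(z))`. -/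
def Sfun (ν μ : ℝ) (τ : ℂ → ℂ) (z : ℂ) : ℂ :=
  (ν : ℂ) * z + (μ : ℂ) * (τ z * wdzbar (fun w => conj (τ w)) z - conj (τ z) * wdzbar τ z)

/-- Euclidean Laplacian `Δh = 4 ∂²h/∂z∂z̄`. -/
def lap (f : ℂ → ℂ) (z : ℂ) : ℂ := 4 * wdz (wdzbar f) z

/-- The mixed magnetic Schrödinger operator `Δ^{ν,μ}_τ`. -/
def DeltaTau (ν μ : ℝ) (τ f : ℂ → ℂ) (z : ℂ) : ℂ :=
  lap f z
    + 2 * (Sfun ν μ τ z * wdz f z - conj (Sfun ν μ τ z) * wdzbar f z)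
    - (‖Sfun ν μ τ z‖ : ℂ)^2 * f z
    + (μ : ℂ) * (τ z * lap (fun w => conj (τ w)) z - conj (τ z) * lap τ z) * f z

/-- The Landau Hamiltonian `Δ_B`. -/
def DeltaB (B : ℝ) (f : ℂ → ℂ) (z : ℂ) : ℂ :=
  lap f z + 2 * (B : ℂ) * (z * wdz f z - conj z * wdzbar f z)
    - (B : ℂ)^2 * (‖z‖ : ℂ)^2 * f z

/-- The magnetic field `B(z) = ν + μ(|∂τ/∂z|² − |∂τ/∂z̄|²)`. -/
def Bfield (ν μ : ℝ) (τ : ℂ → ℂ) (z : ℂ) : ℝ :=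
  ν + μ * ((‖wdz τ z‖)^2 - (‖wdzbar τ z‖)^2)

/-- `φ : ℂ → ℝ` is a smooth gauge: `θ^{ν,μ}_τ = θ_B + i dφ`, i.e.
`i·Dφ(z)(v) = −(1/2)(conj(S(z))v − S(z)conj(v)) + (B/2)(z̄v − z v̄)`. -/
def IsGauge (ν μ B : ℝ) (τ : ℂ → ℂ) (φ : ℂ → ℝ) : Prop :=
  ContDiff ℝ (⊤ : ℕ∞) φ ∧ ∀ z v : ℂ,
    Complex.I * ((fderiv ℝ φ z v : ℝ) : ℂ) =
      -(1/2 : ℂ) * (conj (Sfun ν μ τ z) * v - Sfun ν μ τ z * conj v)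
      + ((B : ℂ)/2) * (conj z * v - z * conj v)

/-! Differentiating the equivariance `τ(az + b) = ρ(a,b)₁ τ(z) + ρ(a,b)₂` shows that both
Wirtinger derivatives `f` of `τ` are semi-invariant: `f(z + b) = χ(b) f(z)` and `f(-z) = ε f(z)`.
At `z = 0` this forces `ε = 1` unless `f ≡ 0`, hence `f(z)² = f(0)²`, and by continuity `f` is
constant. So `τ(z) = c + αz + βz̄` is affine, `S(z) = Bz + K` with `B = ν + μ(|α|² − |β|²)` and
`K = μ(cᾱ − c̄β)`, and `φ(z) = Im(−K̄z)` is a gauge. -/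

theorem fderiv_apply_eq_wdz_mul_add_wdzbar_mul (f : ℂ → ℂ) (z v : ℂ) :
    fderiv ℝ f z v = wdz f z * v + wdzbar f z * conj v := by
  have hv : fderiv ℝ f z v = v.re • fderiv ℝ f z 1 + v.im • fderiv ℝ f z I := by
    rw [← map_smul, ← map_smul, ← map_add, real_smul, real_smul, mul_one, re_add_im]
  rw [hv, real_smul, real_smul, wdz, wdzbar]
  conv_rhs => rw [← re_add_im v, map_add, map_mul, conj_ofReal, conj_ofReal, conj_I]
  linear_combination (fderiv ℝ f z I * v.im) * I_sq

section HasFDerivAt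

variable {f : ℂ → ℂ} {L : ℂ →L[ℝ] ℂ} {z P Q : ℂ}

theorem HasFDerivAt.wdz_eq (hf : HasFDerivAt f L z) (hL : ∀ v, L v = P * v + Q * conj v) :
    wdz f z = P := by
  rw [wdz, hf.fderiv, hL, hL, map_one, conj_I]
  linear_combination (-P / 2 + Q / 2) * I_sq

theorem HasFDerivAt.wdzbar_eq (hf : HasFDerivAt f L z) (hL : ∀ v, L v = P * v + Q * conj v) :
    wdzbar f z = Q := by
  rw [wdzbar, hf.fderiv, hL, hL, map_one, conj_I]
  linear_combination (P / 2 - Q / 2) * I_sq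

end HasFDerivAt

section AffineChange

variable {f : ℂ → ℂ} {a b z : ℂ}

theorem hasFDerivAt_comp_mul_add (hf : DifferentiableAt ℝ f (a * z + b)) :
    HasFDerivAt (fun w => f (a * w + b))
      ((fderiv ℝ f (a * z + b)).comp (a • ContinuousLinearMap.id ℝ ℂ)) z :=
  hf.hasFDerivAt.comp z (((hasFDerivAt_id z).const_mul a).add_const b)

theorem wdz_comp_mul_add (hf : DifferentiableAt ℝ f (a * z + b)) :
    wdz (fun w => f (a * w + b)) z = wdz f (a * z + b) * a :=
  (hasFDerivAt_comp_mul_add hf).wdz_eq (Q := wdzbar f (a * z + b) * conj a) fun v => by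
    simp only [ContinuousLinearMap.comp_apply, smul_apply,
      ContinuousLinearMap.id_apply, smul_eq_mul, fderiv_apply_eq_wdz_mul_add_wdzbar_mul f, map_mul]
    ring

theorem wdzbar_comp_mul_add (hf : DifferentiableAt ℝ f (a * z + b)) :
    wdzbar (fun w => f (a * w + b)) z = wdzbar f (a * z + b) * conj a :=
  (hasFDerivAt_comp_mul_add hf).wdzbar_eq (P := wdz f (a * z + b) * a) fun v => by
    simp only [ContinuousLinearMap.comp_apply, smul_apply,
      ContinuousLinearMap.id_apply, smul_eq_mul, fderiv_apply_eq_wdz_mul_add_wdzbar_mul f, map_mul]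
    ring

theorem wdz_const_mul_add (hf : DifferentiableAt ℝ f z) :
    wdz (fun w => a * f w + b) z = a * wdz f z :=
  ((hf.hasFDerivAt.const_mul a).add_const b).wdz_eq (Q := a * wdzbar f z) fun v => by
    simp only [smul_apply, fderiv_apply_eq_wdz_mul_add_wdzbar_mul f, smul_eq_mul]
    ring

theorem wdzbar_const_mul_add (hf : DifferentiableAt ℝ f z) :
    wdzbar (fun w => a * f w + b) z = a * wdzbar f z :=
  ((hf.hasFDerivAt.const_mul a).add_const b).wdzbar_eq (P := a * wdz f z) fun v => by
    simp only [smul_apply, fderiv_apply_eq_wdz_mul_add_wdzbar_mul f, smul_eq_mul]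
    ring

end AffineChange

section Affine

variable (ν μ : ℝ) (c α β : ℂ)

theorem hasFDerivAt_affine (z : ℂ) :
    HasFDerivAt (fun w => c + α * w + β * conj w)
      (α • ContinuousLinearMap.id ℝ ℂ + β • (conjCLE : ℂ →L[ℝ] ℂ)) z := by
  have hconj := (conjCLE : ℂ →L[ℝ] ℂ).hasFDerivAt (x := z)
  have hsum := (((hasFDerivAt_id z).const_mul α).add (hconj.const_mul β)).const_add c
  refine hsum.congr_of_eventuallyEq (.of_forall fun w => ?_)
  simp [add_assoc]

theorem wdz_affine (z : ℂ) : wdz (fun w => c + α * w + β * conj w) z = α :=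
  (hasFDerivAt_affine c α β z).wdz_eq (Q := β) fun v => by simp

theorem wdzbar_affine (z : ℂ) : wdzbar (fun w => c + α * w + β * conj w) z = β :=
  (hasFDerivAt_affine c α β z).wdzbar_eq (P := α) fun v => by simp

theorem Bfield_affine (z : ℂ) :
    (Bfield ν μ (fun w => c + α * w + β * conj w) z : ℂ) =
      ν + μ * (α * conj α - β * conj β) := by
  simp [Bfield, wdz_affine, wdzbar_affine, mul_conj']

theorem Sfun_affine (z : ℂ) :
    Sfun ν μ (fun w => c + α * w + β * conj w) z =
      Bfield ν μ (fun w => c + α * w + β * conj w) 0 * z + μ * (c * conj α - conj c * β) := by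
  have hconj : (fun w => conj (c + α * w + β * conj w)) =
      fun w => conj c + conj β * w + conj α * conj w := by
    funext w
    simp only [map_add, map_mul, conj_conj]
    ring
  rw [Sfun, hconj, wdzbar_affine, wdzbar_affine, Bfield_affine]
  simp only [map_add, map_mul, conj_conj]
  ring

end Affine

theorem eq_affine_of_wdz_of_wdzbar {f : ℂ → ℂ} {α β : ℂ} (hf : Differentiable ℝ f)
    (hα : ∀ z, wdz f z = α) (hβ : ∀ z, wdzbar f z = β) :
    f = fun w => f 0 + α * w + β * conj w := by
  refine eq_of_fderiv_eq hf (fun z => (hasFDerivAt_affine _ α β z).differentiableAt)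
    (fun z => ContinuousLinearMap.ext fun v => ?_) 0 (by simp)
  rw [fderiv_apply_eq_wdz_mul_add_wdzbar_mul, (hasFDerivAt_affine _ α β z).fderiv, hα, hβ]
  simp

theorem ContDiff.continuous_wdz {f : ℂ → ℂ} (hf : ContDiff ℝ 1 f) : Continuous (wdz f) := by
  have hDf := hf.continuous_fderiv one_ne_zero
  exact continuous_const.mul ((hDf.clm_apply continuous_const).sub
    (continuous_const.mul (hDf.clm_apply continuous_const)))

theorem ContDiff.continuous_wdzbar {f : ℂ → ℂ} (hf : ContDiff ℝ 1 f) :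
    Continuous (wdzbar f) := by
  have hDf := hf.continuous_fderiv one_ne_zero
  exact continuous_const.mul ((hDf.clm_apply continuous_const).add
    (continuous_const.mul (hDf.clm_apply continuous_const)))

theorem eq_apply_zero_of_semiInvariant {V 𝕜 : Type*} [AddGroup V] [TopologicalSpace V]
    [PreconnectedSpace V] [Field 𝕜] [TopologicalSpace 𝕜] [T1Space 𝕜] [ContinuousInv₀ 𝕜]
    [ContinuousMul 𝕜] {f : V → 𝕜} (hf : Continuous f) {χ : V → 𝕜}
    (hχ : ∀ z b, f (z + b) = χ b * f z) {ε : 𝕜} (hε : ∀ z, f (-z) = ε * f z) (z : V) :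
    f z = f 0 := by
  by_cases h0 : f 0 = 0
  · rw [← zero_add z, hχ, h0, mul_zero]
  have hε1 : ε = 1 := by
    have := hε 0
    rw [neg_zero] at this
    exact (mul_eq_right₀ h0).1 this.symm
  have hsq : ∀ z, f z ^ 2 = f 0 ^ 2 := fun z => by
    have h₁ : f 0 = χ (-z) * f z := by rw [← hχ, add_neg_cancel]
    have h₂ : f z = χ (-z) * f 0 := by rw [← hχ, zero_add, hε, hε1, one_mul]
    linear_combination f z * h₂ - f 0 * h₁
  exact isPreconnected_univ.eq_of_sq_eq hf.continuousOn continuousOn_const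
    (fun z _ => hsq z) (fun _ => h0) (Set.mem_univ 0) rfl (Set.mem_univ z)

namespace Equivariant

variable {ρ : G1 → G1} {τ : ℂ → ℂ}

theorem comp_mul_add (h : Equivariant ρ τ) (a : Circle) (b : ℂ) :
    (fun w => τ (a * w + b)) = fun w => (ρ (a, b)).1 * τ w + (ρ (a, b)).2 :=
  funext fun w => h.2 (a, b) w

theorem wdz_mul_add (h : Equivariant ρ τ) (hτ : Differentiable ℝ τ) (a : Circle) (b z : ℂ) :
    wdz τ (a * z + b) * a = (ρ (a, b)).1 * wdz τ z := by
  rw [← wdz_comp_mul_add (hτ _), ← wdz_const_mul_add (hτ _), h.comp_mul_add]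

theorem wdzbar_mul_add (h : Equivariant ρ τ) (hτ : Differentiable ℝ τ) (a : Circle)
    (b z : ℂ) : wdzbar τ (a * z + b) * conj (a : ℂ) = (ρ (a, b)).1 * wdzbar τ z := by
  rw [← wdzbar_comp_mul_add (hτ _), ← wdzbar_const_mul_add (hτ _), h.comp_mul_add]

theorem wdz_eq_wdz_zero (h : Equivariant ρ τ) (hτ : ContDiff ℝ 1 τ) (z : ℂ) :
    wdz τ z = wdz τ 0 := by
  have hτ' := hτ.differentiable one_ne_zero
  refine eq_apply_zero_of_semiInvariant (χ := fun b => (ρ (1, b)).1) (ε := -(ρ (-1, 0)).1)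
    hτ.continuous_wdz (fun z b => ?_) (fun z => ?_) z
  · simpa using h.wdz_mul_add hτ' 1 b z
  · simpa [neg_eq_iff_eq_neg] using h.wdz_mul_add hτ' (-1) 0 z

theorem wdzbar_eq_wdzbar_zero (h : Equivariant ρ τ) (hτ : ContDiff ℝ 1 τ) (z : ℂ) :
    wdzbar τ z = wdzbar τ 0 := by
  have hτ' := hτ.differentiable one_ne_zero
  refine eq_apply_zero_of_semiInvariant (χ := fun b => (ρ (1, b)).1) (ε := -(ρ (-1, 0)).1)
    hτ.continuous_wdzbar (fun z b => ?_) (fun z => ?_) z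
  · simpa using h.wdzbar_mul_add hτ' 1 b z
  · simpa [neg_eq_iff_eq_neg] using h.wdzbar_mul_add hτ' (-1) 0 z

end Equivariant

theorem exists_isGauge_of_Sfun_eq {ν μ B : ℝ} {τ : ℂ → ℂ} {K : ℂ}
    (hS : ∀ z, Sfun ν μ τ z = B * z + K) : ∃ φ : ℂ → ℝ, IsGauge ν μ B τ φ := by
  let φ : ℂ →L[ℝ] ℝ := imCLM.comp ((-conj K) • ContinuousLinearMap.id ℝ ℂ)
  refine ⟨φ, φ.contDiff, fun z v => ?_⟩
  have hφ : φ v = (-conj K * v).im := rfl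
  rw [φ.fderiv, hφ, hS, im_eq_sub_conj]
  simp only [map_add, map_mul, map_neg, conj_conj, conj_ofReal]
  field_simp
  ring

/-- existence of a smooth real gauge `φ` with
`θ^{ν,μ}_τ = θ_B + i dφ`, where `B = ν + μ(|∂τ/∂z(0)|² − |∂τ/∂z̄(0)|²)`. -/
theorem exists_gauge (ρ : G1 → G1) (τ : ℂ → ℂ) (hequiv : Equivariant ρ τ)
    (hτ : ContDiff ℝ (⊤ : ℕ∞) τ) (ν μ : ℝ) :
    ∃ φ : ℂ → ℝ, IsGauge ν μ (Bfield ν μ τ 0) τ φ := by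
  have hτ₁ : ContDiff ℝ 1 τ := hτ.of_le (by simp)
  rw [eq_affine_of_wdz_of_wdzbar (hτ₁.differentiable one_ne_zero)
    (hequiv.wdz_eq_wdz_zero hτ₁) (hequiv.wdzbar_eq_wdzbar_zero hτ₁)]
  exact exists_isGauge_of_Sfun_eq fun z => Sfun_affine ν μ _ _ _ z
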